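/- Let W be a simple voting game on [n] and let Ŵ be the game obtained by inducing a quarrel between players i and j. Then for every S⊆[n] with i,j∉S, the YES-efficacy scores of player i satisfy: α̂⁺_i(S) = α⁺_i(S); α̂⁺_i(S∪{j}) = α⁺_i(S∪{j}); α̂⁺_i(S∪{i}) ≤ α⁺_i(S∪{i}); and α̂⁺_i(S∪{i,j}) ≤ α⁺_i(S∪{i,j}), where α̂ denotes efficacy scores computed in Ŵ and α those computed in W. -/

import Mathlib

open Finset

variable {α : Type*} [Fintype α] [DecidableEq α]

/-- A simple voting game on the player set `α`: a monotone collection of winning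
coalitions in which the empty coalition loses and the full coalition wins. -/
def SimpleVotingGame (W : Finset (Finset α)) : Prop :=
  (∀ S T : Finset α, S ∈ W → S ⊆ T → T ∈ W) ∧ (∅ : Finset α) ∉ W ∧ (univ : Finset α) ∈ W

/-- Player `i` is YES-decisive in the division `S`. -/
def YesDecisive (W : Finset (Finset α)) (i : α) (S : Finset α) : Prop :=
  i ∈ S ∧ S ∈ W ∧ S.erase i ∉ W

/-- Player `i` is NO-decisive in the division `S`. -/
def NoDecisive (W : Finset (Finset α)) (i : α) (S : Finset α) : Prop :=
  i ∉ S ∧ S ∉ W ∧ insert i S ∈ W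

/-- The loyal children of a winning division `S`: the winning divisions `S \ {k}`, `k ∈ S`. -/
def LCwin (W : Finset (Finset α)) (S : Finset α) : Finset (Finset α) :=
  (S.image fun k => S.erase k).filter (· ∈ W)

/-- The loyal children of a losing division `S`: the losing divisions `S ∪ {k}`, `k ∉ S`. -/
def LCloss (W : Finset (Finset α)) (S : Finset α) : Finset (Finset α) :=
  (Sᶜ.image fun k => insert k S).filter (· ∉ W)

/-- The YES-efficacy score `α⁺_i(S)`: `1` if `i` is YES-decisive in `S`, `0` if `S` is
losing or `i ∉ S`, and otherwise the arithmetic mean of `α⁺_i` over the loyal children. -/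
noncomputable def alphaPlus (W : Finset (Finset α)) (i : α) (S : Finset α) : ℝ :=
  if i ∈ S ∧ S ∈ W ∧ S.erase i ∉ W then 1
  else if S ∉ W ∨ i ∉ S then 0
  else (∑ T ∈ (LCwin W S).attach, alphaPlus W i T.1) / (LCwin W S).card
termination_by S.card
decreasing_by
  obtain ⟨T, hT⟩ := T
  simp only [LCwin, Finset.mem_filter, Finset.mem_image] at hT
  obtain ⟨⟨k, hk, rfl⟩, -⟩ := hT
  simpa using Finset.card_erase_lt_of_mem hk

/-- The NO-efficacy score `α⁻_i(S)`: `1` if `i` is NO-decisive in `S`, `0` if `S` is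
winning or `i ∈ S`, and otherwise the arithmetic mean of `α⁻_i` over the loyal children. -/
noncomputable def alphaMinus (W : Finset (Finset α)) (i : α) (S : Finset α) : ℝ :=
  if i ∉ S ∧ S ∉ W ∧ insert i S ∈ W then 1
  else if S ∈ W ∨ i ∈ S then 0
  else (∑ T ∈ (LCloss W S).attach, alphaMinus W i T.1) / (LCloss W S).card
termination_by Sᶜ.card
decreasing_by
  obtain ⟨T, hT⟩ := T
  simp only [LCloss, Finset.mem_filter, Finset.mem_image] at hT
  obtain ⟨⟨k, hk, rfl⟩, -⟩ := hT
  rw [Finset.compl_insert]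
  exact Finset.card_erase_lt_of_mem hk

/-- The efficacy score `α_i(S) = α⁺_i(S) + α⁻_i(S)`. -/
noncomputable def alphaScore (W : Finset (Finset α)) (i : α) (S : Finset α) : ℝ :=
  alphaPlus W i S + alphaMinus W i S

/-- The Recursive Measure of YES-voting power (a priori, equiprobable divisions). -/
noncomputable def RMplus (W : Finset (Finset α)) (i : α) : ℝ :=
  (1 / 2 ^ Fintype.card α) * ∑ S : Finset α, alphaPlus W i S

/-- The Recursive Measure of NO-voting power (a priori, equiprobable divisions). -/
noncomputable def RMminus (W : Finset (Finset α)) (i : α) : ℝ :=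
  (1 / 2 ^ Fintype.card α) * ∑ S : Finset α, alphaMinus W i S

/-- The Recursive Measure of voting power of player `i` (a priori):
`RM_i = 2^{-m} · Σ_S α_i(S)` where `m` is the number of players. -/
noncomputable def RM (W : Finset (Finset α)) (i : α) : ℝ :=
  (1 / 2 ^ Fintype.card α) * ∑ S : Finset α, alphaScore W i S

/-- `d` is a dummy voter: `d` is decisive in no division. -/
def IsDummy (W : Finset (Finset α)) (d : α) : Prop :=
  ∀ S : Finset α, d ∉ S → (insert d S ∈ W ↔ S ∈ W)

/-- Player `j` weakly dominates player `i`. -/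
def WeaklyDominates (W : Finset (Finset α)) (j i : α) : Prop :=
  ∀ S : Finset α, i ∉ S → j ∉ S → insert i S ∈ W → insert j S ∈ W

/-- `What` is the game obtained from `W` by player `j` donating its vote to player `i`. -/
def Donation (W What : Finset (Finset α)) (i j : α) : Prop :=
  ∀ S : Finset α, i ∉ S → j ∉ S →
    (insert i (insert j S) ∈ What ↔ insert i (insert j S) ∈ W) ∧
    (insert i S ∈ What ↔ insert i (insert j S) ∈ W) ∧
    (insert j S ∈ What ↔ S ∈ W) ∧
    (S ∈ What ↔ S ∈ W)

/-- `What` is obtained from `W` by inducing a (weak, symmetric) quarrel between `i` and `j`. -/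
def Quarrel (W What : Finset (Finset α)) (i j : α) : Prop :=
  ∀ S : Finset α, i ∉ S → j ∉ S →
    (insert i (insert j S) ∈ What ↔ (insert i S ∈ W ∨ insert j S ∈ W)) ∧
    (S ∈ What ↔ (insert i S ∈ W ∧ insert j S ∈ W)) ∧
    (insert i S ∈ What ↔ insert i S ∈ W) ∧
    (insert j S ∈ What ↔ insert j S ∈ W)

/-- The voting-independent (product) probability of a division `S`, given the
individual YES-vote probabilities `p`. -/
noncomputable def prodDist (p : α → ℝ) (S : Finset α) : ℝ :=
  (∏ k ∈ S, p k) * ∏ k ∈ Sᶜ, (1 - p k)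

/-- The generalized Recursive Measure of YES-voting power under a
voting-independent probability distribution with vote probabilities `p`. -/
noncomputable def RMplusP (W : Finset (Finset α)) (p : α → ℝ) (i : α) : ℝ :=
  ∑ S : Finset α, alphaPlus W i S * prodDist p S

/-- The generalized Recursive Measure of NO-voting power under a
voting-independent probability distribution with vote probabilities `p`. -/
noncomputable def RMminusP (W : Finset (Finset α)) (p : α → ℝ) (i : α) : ℝ :=
  ∑ S : Finset α, alphaMinus W i S * prodDist p S

/-!
Both scores vanish at divisions not containing `i`, so only `α̂⁺_i(T) ≤ α⁺_i(T)` for `i ∈ T`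
needs proof, by strong induction on `T`. Among divisions containing `i`, the quarrel only removes
winning divisions (by monotonicity of `W`), and it keeps `T \ {i}` winning whenever it was. So
either `i` is YES-decisive at `T` in `W` (score `1`), or both scores are means over loyal children,
those of `Ŵ` forming a subset of those of `W`. Every child dropped in `Ŵ` is one at which `i` is
YES-decisive in `W`, hence carries the maximal score `1`, and removing maximal values from a
family can only lower its mean.
-/

theorem sum_div_card_le_sum_div_card_of_subset {ι K : Type*} [DecidableEq ι] [Field K]
    [LinearOrder K] [IsStrictOrderedRing K] {A B : Finset ι} {g : ι → K} (hAB : A ⊆ B)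
    (hle : ∀ x ∈ A, g x ≤ 1) (heq : ∀ x ∈ B \ A, g x = 1) :
    (∑ x ∈ A, g x) / #A ≤ (∑ x ∈ B, g x) / #B := by
  have hsum : ∑ x ∈ B, g x = ∑ x ∈ A, g x + (#B - #A) := by
    rw [← sum_sdiff hAB, sum_congr rfl heq, sum_const, card_sdiff_of_subset hAB, nsmul_one,
      Nat.cast_sub (card_le_card hAB), add_comm]
  have hA : ∑ x ∈ A, g x ≤ #A := (sum_le_sum hle).trans_eq (by simp)
  have hAB' : (#A : K) ≤ #B := by exact_mod_cast card_le_card hAB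
  rcases A.eq_empty_or_nonempty with rfl | hAne
  · simp only [sum_empty, card_empty, Nat.cast_zero, zero_div, zero_add, sub_zero] at hsum ⊢
    rw [hsum]
    exact div_nonneg (Nat.cast_nonneg _) (Nat.cast_nonneg _)
  have hApos : (0 : K) < #A := by exact_mod_cast hAne.card_pos
  rw [div_le_div_iff₀ hApos (hApos.trans_le hAB'), hsum]
  nlinarith [mul_nonneg (sub_nonneg.2 hA) (sub_nonneg.2 hAB')]

section Scores

variable {β : Type*} [DecidableEq β] {W : Finset (Finset β)} {i : β} {T : Finset β}

theorem mem_LCwin {U : Finset β} : U ∈ LCwin W T ↔ (∃ k ∈ T, T.erase k = U) ∧ U ∈ W := by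
  simp [LCwin]

theorem alphaPlus_of_notMem (h : i ∉ T) : alphaPlus W i T = 0 := by
  rw [alphaPlus, if_neg fun hc => h hc.1, if_pos (Or.inr h)]

theorem alphaPlus_of_losing (h : T ∉ W) : alphaPlus W i T = 0 := by
  rw [alphaPlus, if_neg fun hc => h hc.2.1, if_pos (Or.inl h)]

theorem alphaPlus_of_yesDecisive (h : YesDecisive W i T) : alphaPlus W i T = 1 := by
  rw [alphaPlus]
  exact if_pos h

theorem alphaPlus_eq_sum_div_card (hi : i ∈ T) (hT : T ∈ W) (hTi : T.erase i ∈ W) :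
    alphaPlus W i T = (∑ U ∈ LCwin W T, alphaPlus W i U) / #(LCwin W T) := by
  rw [alphaPlus, if_neg fun h => h.2.2 hTi, if_neg fun h => h.elim (· hT) (· hi), sum_attach]

theorem alphaPlus_nonneg (W : Finset (Finset β)) (i : β) (T : Finset β) :
    0 ≤ alphaPlus W i T := by
  induction T using strongInduction with
  | H T ih =>
    rw [alphaPlus]
    split_ifs
    · exact zero_le_one
    · exact le_rfl
    · refine div_nonneg (sum_nonneg fun U _ => ?_) (Nat.cast_nonneg _)
      obtain ⟨⟨k, hk, hU⟩, -⟩ := mem_LCwin.1 U.2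
      exact ih U (hU ▸ erase_ssubset hk)

theorem alphaPlus_le_one (W : Finset (Finset β)) (i : β) (T : Finset β) :
    alphaPlus W i T ≤ 1 := by
  induction T using strongInduction with
  | H T ih =>
    rw [alphaPlus]
    split_ifs
    · exact le_rfl
    · exact zero_le_one
    · have hle : ∀ U ∈ (LCwin W T).attach, alphaPlus W i U ≤ 1 := fun U _ => by
        obtain ⟨⟨k, hk, hU⟩, -⟩ := mem_LCwin.1 U.2
        exact ih U (hU ▸ erase_ssubset hk)
      exact div_le_one_of_le₀ ((sum_le_sum hle).trans_eq (by simp)) (Nat.cast_nonneg _)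

end Scores

namespace Quarrel

variable {β : Type*} [DecidableEq β] {W What : Finset (Finset β)} {i j : β} {T : Finset β}

theorem mem_iff_of_mem_of_mem (hq : Quarrel W What i j) (hij : i ≠ j) (hi : i ∈ T) (hj : j ∈ T) :
    T ∈ What ↔ T.erase j ∈ W ∨ T.erase i ∈ W := by
  have hiS : i ∉ (T.erase i).erase j := fun h => notMem_erase i T (mem_of_mem_erase h)
  have hjS : j ∉ (T.erase i).erase j := notMem_erase j _
  have hTi : insert j ((T.erase i).erase j) = T.erase i :=
    insert_erase (mem_erase_of_ne_of_mem hij.symm hj)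
  have hTj : insert i ((T.erase i).erase j) = T.erase j := by
    rw [erase_right_comm, insert_erase (mem_erase_of_ne_of_mem hij hi)]
  simpa only [hTi, hTj, insert_erase hi] using (hq _ hiS hjS).1

theorem mem_iff_of_mem_of_notMem (hq : Quarrel W What i j) (hi : i ∈ T) (hj : j ∉ T) :
    T ∈ What ↔ T ∈ W := by
  simpa only [insert_erase hi] using
    (hq (T.erase i) (notMem_erase i T) fun h => hj (mem_of_mem_erase h)).2.2.1

theorem mem_iff_of_notMem_of_mem (hq : Quarrel W What i j) (hi : i ∉ T) (hj : j ∈ T) :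
    T ∈ What ↔ T ∈ W := by
  simpa only [insert_erase hj] using
    (hq (T.erase j) (fun h => hi (mem_of_mem_erase h)) (notMem_erase j T)).2.2.2

theorem mem_of_mem_quarrel (hq : Quarrel W What i j) (hW : IsUpperSet (W : Set (Finset β)))
    (hij : i ≠ j) (hi : i ∈ T) (hT : T ∈ What) : T ∈ W := by
  by_cases hj : j ∈ T
  · rcases (hq.mem_iff_of_mem_of_mem hij hi hj).1 hT with h | h <;> exact hW (erase_subset _ _) h
  · exact (hq.mem_iff_of_mem_of_notMem hi hj).1 hT

theorem erase_mem_quarrel (hq : Quarrel W What i j) (hW : IsUpperSet (W : Set (Finset β)))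
    (hij : i ≠ j) (hi : i ∈ T) (hTi : T.erase i ∈ W) : T.erase i ∈ What := by
  by_cases hj : j ∈ T
  · exact (hq.mem_iff_of_notMem_of_mem (notMem_erase i T)
      (mem_erase_of_ne_of_mem hij.symm hj)).2 hTi
  · have hjT : j ∉ T.erase i := fun h => hj (mem_of_mem_erase h)
    refine (hq _ (notMem_erase i T) hjT).2.1.2 ⟨?_, hW (subset_insert _ _) hTi⟩
    rw [insert_erase hi]
    exact hW (erase_subset _ _) hTi

theorem yesDecisive_of_notMem_quarrel (hq : Quarrel W What i j) (hij : i ≠ j) (hi : i ∈ T)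
    (hT : T ∈ W) (hT' : T ∉ What) : YesDecisive W i T := by
  refine ⟨hi, hT, fun hTi => hT' ?_⟩
  by_cases hj : j ∈ T
  · exact (hq.mem_iff_of_mem_of_mem hij hi hj).2 (Or.inr hTi)
  · exact (hq.mem_iff_of_mem_of_notMem hi hj).2 hT

theorem LCwin_subset_LCwin (hq : Quarrel W What i j) (hW : IsUpperSet (W : Set (Finset β)))
    (hij : i ≠ j) (hi : i ∈ T) (hTi : T.erase i ∈ W) : LCwin What T ⊆ LCwin W T := by
  intro U hU
  obtain ⟨⟨k, hk, rfl⟩, hU⟩ := mem_LCwin.1 hU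
  refine mem_LCwin.2 ⟨⟨k, hk, rfl⟩, ?_⟩
  rcases eq_or_ne k i with rfl | hki
  · exact hTi
  · exact hq.mem_of_mem_quarrel hW hij (mem_erase_of_ne_of_mem hki.symm hi) hU

theorem yesDecisive_of_mem_LCwin_sdiff (hq : Quarrel W What i j) (hij : i ≠ j) (hi : i ∈ T)
    (hTi : T.erase i ∈ What) {U : Finset β} (hU : U ∈ LCwin W T \ LCwin What T) :
    YesDecisive W i U := by
  obtain ⟨hUW, hUWhat⟩ := mem_sdiff.1 hU
  obtain ⟨⟨k, hk, rfl⟩, hU⟩ := mem_LCwin.1 hUW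
  have hU' : T.erase k ∉ What := fun h => hUWhat (mem_LCwin.2 ⟨⟨k, hk, rfl⟩, h⟩)
  have hki : k ≠ i := by
    rintro rfl
    exact hU' hTi
  exact hq.yesDecisive_of_notMem_quarrel hij (mem_erase_of_ne_of_mem hki.symm hi) hU hU'

theorem alphaPlus_le (hq : Quarrel W What i j) (hW : IsUpperSet (W : Set (Finset β)))
    (hij : i ≠ j) (T : Finset β) : alphaPlus What i T ≤ alphaPlus W i T := by
  induction T using strongInduction with
  | H T ih =>
  by_cases hi : i ∈ T
  swap
  · rw [alphaPlus_of_notMem hi, alphaPlus_of_notMem hi]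
  by_cases hT : T ∈ What
  swap
  · rw [alphaPlus_of_losing hT]
    exact alphaPlus_nonneg W i T
  have hTW : T ∈ W := hq.mem_of_mem_quarrel hW hij hi hT
  by_cases hTi : T.erase i ∈ W
  swap
  · rw [alphaPlus_of_yesDecisive ⟨hi, hTW, hTi⟩]
    exact alphaPlus_le_one What i T
  have hTi' : T.erase i ∈ What := hq.erase_mem_quarrel hW hij hi hTi
  rw [alphaPlus_eq_sum_div_card hi hT hTi', alphaPlus_eq_sum_div_card hi hTW hTi]
  calc (∑ U ∈ LCwin What T, alphaPlus What i U) / #(LCwin What T)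
      ≤ (∑ U ∈ LCwin What T, alphaPlus W i U) / #(LCwin What T) := by
        gcongr with U hU
        obtain ⟨⟨k, hk, rfl⟩, -⟩ := mem_LCwin.1 hU
        exact ih _ (erase_ssubset hk)
    _ ≤ (∑ U ∈ LCwin W T, alphaPlus W i U) / #(LCwin W T) :=
        sum_div_card_le_sum_div_card_of_subset (hq.LCwin_subset_LCwin hW hij hi hTi)
          (fun U _ => alphaPlus_le_one W i U) fun U hU =>
            alphaPlus_of_yesDecisive (hq.yesDecisive_of_mem_LCwin_sdiff hij hi hTi' hU)

end Quarrel

/-- quarrels and YES-efficacy scores. -/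
theorem quarrel_alphaPlus {n : ℕ} (W What : Finset (Finset (Fin n)))
    (hW : SimpleVotingGame W) (i j : Fin n) (hij : i ≠ j)
    (hq : Quarrel W What i j) :
    ∀ S : Finset (Fin n), i ∉ S → j ∉ S →
      alphaPlus What i S = alphaPlus W i S ∧
      alphaPlus What i (insert j S) = alphaPlus W i (insert j S) ∧
      alphaPlus What i (insert i S) ≤ alphaPlus W i (insert i S) ∧
      alphaPlus What i (insert i (insert j S)) ≤ alphaPlus W i (insert i (insert j S)) := by
  intro S hiS _
  have hiJS : i ∉ insert j S := by simp [hij, hiS]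
  have hup : IsUpperSet (W : Set (Finset (Fin n))) := fun _ _ hST hS => hW.1 _ _ hS hST
  refine ⟨?_, ?_, hq.alphaPlus_le hup hij _, hq.alphaPlus_le hup hij _⟩
  · rw [alphaPlus_of_notMem hiS, alphaPlus_of_notMem hiS]
  · rw [alphaPlus_of_notMem hiJS, alphaPlus_of_notMem hiJS]
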